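/- (Theorem 1, 'before' version.) Let (Θ₁, μ₁) and (Θ₂, μ₂) be probability spaces, let R* : Θ₁ × Θ₂ → ℝ be square-integrable with respect to μ₁ ⊗ μ₂, and for each n let ε_n : Θ₁ × Θ₂ → ℝ be measurable with sup_{(θ₁,θ₂)} |ε_n(θ₁,θ₂)| → 0 as n → ∞. Set R_n = R* + ε_n. If Var^b_{θ₁}(R*) > Var^b_{θ₂}(R*), then there exists N such that for all n ≥ N, Var^b_{θ₁}(R_n) > Var^b_{θ₂}(R_n); i.e. the sample importance ranking of the hyperparameters converges to the population ranking as n → ∞. -/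

import Mathlib

/-!
`varB1 μ₁ μ₂ f` is the integral of the square of the centered partial mean
`θ₁ ↦ ∫ f(θ₁, ·) dμ₂ - ∫ f`, which is additive in `f` and bounded by `2 δ` for a function
bounded by `δ`. Expanding the square, both importances are therefore continuous under uniform
perturbations of an `L²` function (`varB2` is `varB1` after swapping the factors), so a strict
inequality between them persists for all large `n`.
-/

open MeasureTheory Filter

/-- The 'before' importance of the first hyperparameter. -/
noncomputable def varB1 {Θ₁ Θ₂ : Type*} [MeasurableSpace Θ₁] [MeasurableSpace Θ₂]
    (μ₁ : Measure Θ₁) (μ₂ : Measure Θ₂) (f : Θ₁ × Θ₂ → ℝ) : ℝ :=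
  ∫ θ₁, (∫ θ₂, f (θ₁, θ₂) ∂μ₂ - ∫ p, f p ∂(μ₁.prod μ₂)) ^ 2 ∂μ₁

/-- The 'before' importance of the second hyperparameter. -/
noncomputable def varB2 {Θ₁ Θ₂ : Type*} [MeasurableSpace Θ₁] [MeasurableSpace Θ₂]
    (μ₁ : Measure Θ₁) (μ₂ : Measure Θ₂) (f : Θ₁ × Θ₂ → ℝ) : ℝ :=
  ∫ θ₂, (∫ θ₁, f (θ₁, θ₂) ∂μ₁ - ∫ p, f p ∂(μ₁.prod μ₂)) ^ 2 ∂μ₂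

open Topology

section Perturbation

variable {α : Type*} [MeasurableSpace α] {μ : Measure α} [IsProbabilityMeasure μ]

lemma sq_integral_le_integral_sq {g : α → ℝ} (hg : MemLp g 2 μ) :
    (∫ x, g x ∂μ) ^ 2 ≤ ∫ x, g x ^ 2 ∂μ := by
  have h := ProbabilityTheory.variance_nonneg g μ
  rw [ProbabilityTheory.variance_eq_sub hg] at h
  simpa using sub_nonneg.mp h

lemma abs_integral_add_sq_sub_integral_sq_le {a b : α → ℝ} {δ : ℝ} (ha : MemLp a 2 μ)
    (hb : AEStronglyMeasurable b μ) (hbδ : ∀ᵐ x ∂μ, |b x| ≤ δ) :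
    |∫ x, (a x + b x) ^ 2 ∂μ - ∫ x, a x ^ 2 ∂μ| ≤ 2 * δ * ∫ x, |a x| ∂μ + δ ^ 2 := by
  have ha1 : Integrable a μ := ha.integrable one_le_two
  have hbδ' : ∀ᵐ x ∂μ, ‖b x‖ ≤ δ := hbδ
  have hcross : Integrable (fun x => 2 * a x * b x + b x ^ 2) μ := by
    have hb1 : Integrable b μ := .of_bound hb δ hbδ'
    refine (((ha1.bdd_mul hb hbδ').const_mul 2).add (hb1.bdd_mul hb hbδ')).congr
      (ae_of_all _ fun x => ?_)
    simp only [Pi.add_apply]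
    ring
  have hexpand : ∫ x, (a x + b x) ^ 2 ∂μ
      = ∫ x, a x ^ 2 ∂μ + ∫ x, (2 * a x * b x + b x ^ 2) ∂μ := by
    rw [← integral_add ha.integrable_sq hcross]
    congr 1 with x
    ring
  rw [hexpand, add_sub_cancel_left]
  calc |∫ x, (2 * a x * b x + b x ^ 2) ∂μ|
      ≤ ∫ x, |2 * a x * b x + b x ^ 2| ∂μ := abs_integral_le_integral_abs
    _ ≤ ∫ x, (2 * δ * |a x| + δ ^ 2) ∂μ := by
        refine integral_mono_ae hcross.abs ((ha1.abs.const_mul _).add (integrable_const _)) ?_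
        filter_upwards [hbδ] with x hx
        calc |2 * a x * b x + b x ^ 2| ≤ 2 * |a x| * |b x| + |b x| ^ 2 := by
              have h := abs_add_le (2 * a x * b x) (b x ^ 2)
              rwa [abs_mul, abs_mul, abs_pow, abs_two] at h
          _ ≤ 2 * |a x| * δ + δ ^ 2 := by gcongr
          _ = 2 * δ * |a x| + δ ^ 2 := by ring
    _ = 2 * δ * ∫ x, |a x| ∂μ + δ ^ 2 := by
        rw [integral_add (ha1.abs.const_mul _) (integrable_const _), integral_const_mul]
        simp

lemma tendsto_integral_add_sq {ι : Type*} {l : Filter ι} {a : α → ℝ} {b : ι → α → ℝ}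
    (ha : MemLp a 2 μ) (hb : ∀ i, AEStronglyMeasurable (b i) μ)
    (hbl : ∀ δ > 0, ∀ᶠ i in l, ∀ x, |b i x| ≤ δ) :
    Tendsto (fun i => ∫ x, (a x + b i x) ^ 2 ∂μ) l (𝓝 (∫ x, a x ^ 2 ∂μ)) := by
  set C := ∫ x, |a x| ∂μ
  have hbound : Tendsto (fun δ : ℝ => 2 * δ * C + δ ^ 2) (𝓝[>] 0) (𝓝 0) := by
    have hcont : Continuous fun δ : ℝ => 2 * δ * C + δ ^ 2 := by fun_prop
    simpa using (hcont.tendsto 0).mono_left nhdsWithin_le_nhds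
  rw [Metric.tendsto_nhds]
  intro η hη
  obtain ⟨δ, hδη, hδ⟩ := ((hbound.eventually (gt_mem_nhds hη)).and self_mem_nhdsWithin).exists
  filter_upwards [hbl δ hδ] with i hi
  exact (abs_integral_add_sq_sub_integral_sq_le ha (hb i) (ae_of_all _ hi)).trans_lt hδη

end Perturbation

section PartialMean

variable {Θ₁ Θ₂ : Type*} [MeasurableSpace Θ₁] [MeasurableSpace Θ₂]
  {μ₁ : Measure Θ₁} {μ₂ : Measure Θ₂}

variable (μ₁ μ₂) in
noncomputable def centeredPartialMean (f : Θ₁ × Θ₂ → ℝ) (θ₁ : Θ₁) : ℝ :=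
  ∫ θ₂, f (θ₁, θ₂) ∂μ₂ - ∫ p, f p ∂(μ₁.prod μ₂)

lemma varB1_eq_integral_centeredPartialMean_sq (f : Θ₁ × Θ₂ → ℝ) :
    varB1 μ₁ μ₂ f = ∫ θ₁, centeredPartialMean μ₁ μ₂ f θ₁ ^ 2 ∂μ₁ :=
  rfl

lemma memLp_centeredPartialMean [IsFiniteMeasure μ₁] [IsProbabilityMeasure μ₂]
    {f : Θ₁ × Θ₂ → ℝ} (hf : MemLp f 2 (μ₁.prod μ₂)) :
    MemLp (centeredPartialMean μ₁ μ₂ f) 2 μ₁ := by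
  have hf1 : Integrable f (μ₁.prod μ₂) := hf.integrable one_le_two
  have hmean : Integrable (fun θ₁ => ∫ θ₂, f (θ₁, θ₂) ∂μ₂) μ₁ := hf1.integral_prod_left
  have hsq : Integrable (fun θ₁ => (∫ θ₂, f (θ₁, θ₂) ∂μ₂) ^ 2) μ₁ := by
    refine hf.integrable_sq.integral_prod_left.mono' (hmean.aestronglyMeasurable.pow 2) ?_
    filter_upwards [hf1.prod_right_ae, hf.integrable_sq.prod_right_ae] with θ₁ h1 h2
    rw [Real.norm_eq_abs, abs_pow, sq_abs]
    exact sq_integral_le_integral_sq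
      ((memLp_two_iff_integrable_sq h1.aestronglyMeasurable).mpr h2)
  exact ((memLp_two_iff_integrable_sq hmean.aestronglyMeasurable).mpr hsq).sub (memLp_const _)

lemma centeredPartialMean_add [SFinite μ₁] [SFinite μ₂] {f g : Θ₁ × Θ₂ → ℝ}
    (hf : Integrable f (μ₁.prod μ₂)) (hg : Integrable g (μ₁.prod μ₂)) :
    centeredPartialMean μ₁ μ₂ (f + g)
      =ᵐ[μ₁] centeredPartialMean μ₁ μ₂ f + centeredPartialMean μ₁ μ₂ g := by
  filter_upwards [hf.prod_right_ae, hg.prod_right_ae] with θ₁ hf₁ hg₁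
  simp only [centeredPartialMean, Pi.add_apply, integral_add hf₁ hg₁, integral_add hf hg]
  ring

lemma abs_centeredPartialMean_le [IsProbabilityMeasure μ₁] [IsProbabilityMeasure μ₂]
    {e : Θ₁ × Θ₂ → ℝ} {δ : ℝ} (he : ∀ p, |e p| ≤ δ) (θ₁ : Θ₁) :
    |centeredPartialMean μ₁ μ₂ e θ₁| ≤ 2 * δ := by
  have he' : ∀ p, ‖e p‖ ≤ δ := he
  have hpartial : |∫ θ₂, e (θ₁, θ₂) ∂μ₂| ≤ δ := by
    simpa using norm_integral_le_of_norm_le_const (μ := μ₂) (ae_of_all _ fun θ₂ => he' (θ₁, θ₂))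
  have htotal : |∫ p, e p ∂(μ₁.prod μ₂)| ≤ δ := by
    simpa using norm_integral_le_of_norm_le_const (μ := μ₁.prod μ₂) (ae_of_all _ he')
  calc |centeredPartialMean μ₁ μ₂ e θ₁|
      ≤ |∫ θ₂, e (θ₁, θ₂) ∂μ₂| + |∫ p, e p ∂(μ₁.prod μ₂)| := abs_sub _ _
    _ ≤ 2 * δ := by linarith

end PartialMean

section Importance

variable {Θ₁ Θ₂ : Type*} [MeasurableSpace Θ₁] [MeasurableSpace Θ₂]
  {μ₁ : Measure Θ₁} {μ₂ : Measure Θ₂}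

lemma varB2_eq_varB1_swap [SFinite μ₁] [SFinite μ₂] (g : Θ₁ × Θ₂ → ℝ) :
    varB2 μ₁ μ₂ g = varB1 μ₂ μ₁ (g ∘ Prod.swap) := by
  simp only [varB1, varB2, Function.comp_apply, Prod.swap_prod_mk, integral_prod_swap]

variable [IsProbabilityMeasure μ₁] [IsProbabilityMeasure μ₂]
  {ι : Type*} {l : Filter ι} {f : Θ₁ × Θ₂ → ℝ} {e : ι → Θ₁ × Θ₂ → ℝ}

lemma tendsto_varB1_add (hf : MemLp f 2 (μ₁.prod μ₂)) (he : ∀ i, Measurable (e i))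
    (hel : ∀ δ > 0, ∀ᶠ i in l, ∀ p, |e i p| ≤ δ) :
    Tendsto (fun i => varB1 μ₁ μ₂ (f + e i)) l (𝓝 (varB1 μ₁ μ₂ f)) := by
  have hsplit : ∀ᶠ i in l, ∫ θ₁, (centeredPartialMean μ₁ μ₂ f θ₁
      + centeredPartialMean μ₁ μ₂ (e i) θ₁) ^ 2 ∂μ₁ = varB1 μ₁ μ₂ (f + e i) := by
    filter_upwards [hel 1 one_pos] with i hi
    have hei : Integrable (e i) (μ₁.prod μ₂) :=
      .of_bound (he i).aestronglyMeasurable 1 (ae_of_all _ hi)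
    rw [varB1_eq_integral_centeredPartialMean_sq]
    refine integral_congr_ae ?_
    filter_upwards [centeredPartialMean_add (hf.integrable one_le_two) hei] with θ₁ h
    rw [h, Pi.add_apply]
  refine (tendsto_integral_add_sq (memLp_centeredPartialMean hf) (fun i => ?_) ?_).congr' hsplit
  · exact ((he i).stronglyMeasurable.integral_prod_right').aestronglyMeasurable.sub
      aestronglyMeasurable_const
  · intro δ hδ
    filter_upwards [hel (δ / 2) (half_pos hδ)] with i hi θ₁
    simpa [mul_div_cancel₀] using abs_centeredPartialMean_le hi θ₁

lemma tendsto_varB2_add (hf : MemLp f 2 (μ₁.prod μ₂)) (he : ∀ i, Measurable (e i))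
    (hel : ∀ δ > 0, ∀ᶠ i in l, ∀ p, |e i p| ≤ δ) :
    Tendsto (fun i => varB2 μ₁ μ₂ (f + e i)) l (𝓝 (varB2 μ₁ μ₂ f)) := by
  simp only [varB2_eq_varB1_swap]
  exact tendsto_varB1_add (hf.comp_measurePreserving Measure.measurePreserving_swap)
    (fun i => (he i).comp measurable_swap) fun δ hδ => (hel δ hδ).mono fun _ h p => h p.swap

end Importance

theorem importance_ranking_eventually_consistent_before
    {Θ₁ Θ₂ : Type*} [MeasurableSpace Θ₁] [MeasurableSpace Θ₂]
    (μ₁ : Measure Θ₁) (μ₂ : Measure Θ₂)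
    [IsProbabilityMeasure μ₁] [IsProbabilityMeasure μ₂]
    (Rstar : Θ₁ × Θ₂ → ℝ) (hRstar : MemLp Rstar 2 (μ₁.prod μ₂))
    (ε : ℕ → Θ₁ × Θ₂ → ℝ) (hmeas : ∀ n, Measurable (ε n))
    (hunif : ∀ δ > (0 : ℝ), ∃ N : ℕ, ∀ n ≥ N, ∀ p : Θ₁ × Θ₂, |ε n p| ≤ δ)
    (hrank : varB2 μ₁ μ₂ Rstar < varB1 μ₁ μ₂ Rstar) :
    ∃ N : ℕ, ∀ n ≥ N,
      varB2 μ₁ μ₂ (Rstar + ε n) < varB1 μ₁ μ₂ (Rstar + ε n) := by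
  have hε : ∀ δ > 0, ∀ᶠ n in atTop, ∀ p, |ε n p| ≤ δ :=
    fun δ hδ => eventually_atTop.mpr (hunif δ hδ)
  exact eventually_atTop.mp <| (tendsto_varB2_add hRstar hmeas hε).eventually_lt
    (tendsto_varB1_add hRstar hmeas hε) hrank
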